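/- arXiv:2505.10519 — 6 statements merged into one kernel-verified Lean document; each statement's English description precedes it below -/
import Mathlib

section
/- Under NURVA and individual positivity (π_i(d) > 0 for every unit i), the variance of the Horvitz–Thompson estimator satisfies Var[ŷ(d)] = N^{-2} ∑_{i=1}^N ∑_{j=1}^N ((π_ij(d) − π_i(d) π_j(d)) / (π_i(d) π_j(d))) · ȳ_i(d) ȳ_j(d). -/
open Finset

/-- Expectation with respect to a pmf `p` on a finite sample space. -/
noncomputable def expec {Ω : Type*} [Fintype Ω] (p : Ω → ℝ) (X : Ω → ℝ) : ℝ :=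
  ∑ ω, p ω * X ω

/-- Variance with respect to a pmf `p` on a finite sample space. -/
noncomputable def vari {Ω : Type*} [Fintype Ω] (p : Ω → ℝ) (X : Ω → ℝ) : ℝ :=
  expec p (fun ω => (X ω - expec p X) ^ 2)

/-- Exposure probability `π_i(d)`. -/
noncomputable def piP {Ω E : Type*} [Fintype Ω] [DecidableEq E] {N : ℕ}
    (p : Ω → ℝ) (g : Fin N → Ω → E) (d : E) (i : Fin N) : ℝ :=
  ∑ ω ∈ Finset.univ.filter (fun ω => g i ω = d), p ω

/-- Joint exposure probability `π_ij(d)`. -/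
noncomputable def piP2 {Ω E : Type*} [Fintype Ω] [DecidableEq E] {N : ℕ}
    (p : Ω → ℝ) (g : Fin N → Ω → E) (d : E) (i j : Fin N) : ℝ :=
  ∑ ω ∈ Finset.univ.filter (fun ω => g i ω = d ∧ g j ω = d), p ω

/-- Expected potential outcome (EPO) `ȳ_i(d)`. -/
noncomputable def epo {Ω E : Type*} [Fintype Ω] [DecidableEq E] {N : ℕ}
    (p : Ω → ℝ) (y : Fin N → Ω → ℝ) (g : Fin N → Ω → E) (d : E) (i : Fin N) : ℝ :=
  (∑ ω ∈ Finset.univ.filter (fun ω => g i ω = d), y i ω * p ω) / piP p g d i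

/-- Average expected potential outcome (AEPO) `ȳ(d)`. -/
noncomputable def aepo {Ω E : Type*} [Fintype Ω] [DecidableEq E] {N : ℕ}
    (p : Ω → ℝ) (y : Fin N → Ω → ℝ) (g : Fin N → Ω → E) (d : E) : ℝ :=
  (1 / (N : ℝ)) * ∑ i, epo p y g d i

/-- Horvitz–Thompson estimator `ŷ(d)` as a random variable on `Ω`. -/
noncomputable def ht {Ω E : Type*} [Fintype Ω] [DecidableEq E] {N : ℕ}
    (p : Ω → ℝ) (y : Fin N → Ω → ℝ) (g : Fin N → Ω → E) (d : E) (ω : Ω) : ℝ :=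
  (1 / (N : ℝ)) * ∑ i, y i ω * (if g i ω = d then (1 : ℝ) else 0) / piP p g d i

/-- No Unmodeled Revealable Variation Assumption (NURVA). -/
def NURVA {Ω E : Type*} {N : ℕ}
    (p : Ω → ℝ) (y : Fin N → Ω → ℝ) (g : Fin N → Ω → E) : Prop :=
  ∀ ω ω', 0 < p ω → 0 < p ω' → ∀ i : Fin N, g i ω = g i ω' → y i ω = y i ω'

-- aux lemmas
lemma ynur {Ω E : Type*} [Fintype Ω] [DecidableEq E] {N : ℕ}
    (p : Ω → ℝ) (hp : ∀ ω, 0 ≤ p ω) (y : Fin N → Ω → ℝ) (g : Fin N → Ω → E) (d : E)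
    (hnurva : NURVA p y g) (hpos : ∀ i : Fin N, 0 < piP p g d i)
    (i : Fin N) (ω : Ω) (hω : 0 < p ω) (hg : g i ω = d) :
    y i ω = epo p y g d i := by
  have hsum : ∑ ω' ∈ Finset.univ.filter (fun ω' => g i ω' = d), y i ω' * p ω'
      = y i ω * piP p g d i := by
    rw [piP, Finset.mul_sum]
    refine Finset.sum_congr rfl ?_
    intro ω' hω'
    simp only [Finset.mem_filter] at hω'
    rcases (hp ω').eq_or_lt with h0 | h0
    · rw [← h0]; ring
    · rw [hnurva ω' ω h0 hω i (by rw [hω'.2, hg])]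
  rw [epo, hsum, mul_div_assoc, div_self (hpos i).ne', mul_one]

lemma piP_eq_sum_ite {Ω E : Type*} [Fintype Ω] [DecidableEq E] {N : ℕ}
    (p : Ω → ℝ) (g : Fin N → Ω → E) (d : E) (i : Fin N) :
    ∑ ω, p ω * (if g i ω = d then (1:ℝ) else 0) = piP p g d i := by
  rw [piP, Finset.sum_filter]
  simp [mul_ite]

lemma piP2_eq_sum_ite {Ω E : Type*} [Fintype Ω] [DecidableEq E] {N : ℕ}
    (p : Ω → ℝ) (g : Fin N → Ω → E) (d : E) (i j : Fin N) :
    ∑ ω, p ω * ((if g i ω = d then (1:ℝ) else 0) * (if g j ω = d then (1:ℝ) else 0))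
      = piP2 p g d i j := by
  rw [piP2, Finset.sum_filter]
  refine Finset.sum_congr rfl fun ω _ => ?_
  by_cases h1 : g i ω = d <;> by_cases h2 : g j ω = d <;> simp [h1, h2]

lemma vari_eq_sub {Ω : Type*} [Fintype Ω] (p : Ω → ℝ) (hps : ∑ ω, p ω = 1) (X : Ω → ℝ) :
    vari p X = expec p (fun ω => X ω ^ 2) - (expec p X) ^ 2 := by
  have h : ∀ ω, p ω * (X ω - expec p X) ^ 2
      = p ω * X ω ^ 2 - 2 * expec p X * (p ω * X ω) + (expec p X) ^ 2 * p ω := by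
    intro ω; ring
  simp only [vari]
  conv_lhs => rw [expec]
  rw [Finset.sum_congr rfl (fun ω _ => h ω), Finset.sum_add_distrib, Finset.sum_sub_distrib,
    ← Finset.mul_sum, ← Finset.mul_sum, hps]
  simp only [expec]
  ring

/-- Under NURVA and individual positivity, the variance of the
Horvitz–Thompson estimator is
`Var[ŷ(d)] = N⁻² ∑_i ∑_j ((π_ij(d) − π_i(d)π_j(d))/(π_i(d)π_j(d))) ȳ_i(d) ȳ_j(d)`. -/
theorem ht_variance_formula {Ω E : Type*} [Fintype Ω] [Nonempty Ω] [DecidableEq E]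
    {N : ℕ} (hN : 1 ≤ N)
    (p : Ω → ℝ) (hp : ∀ ω, 0 ≤ p ω) (hps : ∑ ω, p ω = 1)
    (y : Fin N → Ω → ℝ) (g : Fin N → Ω → E) (d : E)
    (hnurva : NURVA p y g)
    (hpos : ∀ i : Fin N, 0 < piP p g d i) :
    vari p (ht p y g d)
      = ((N : ℝ) ^ 2)⁻¹ * ∑ i : Fin N, ∑ j : Fin N,
          ((piP2 p g d i j - piP p g d i * piP p g d j) / (piP p g d i * piP p g d j))
            * (epo p y g d i * epo p y g d j) := by
  have hne : ∀ i, piP p g d i ≠ 0 := fun i => (hpos i).ne'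
  have key1 : ∀ (i : Fin N) (ω : Ω),
      p ω * (y i ω * (if g i ω = d then (1:ℝ) else 0))
        = p ω * (epo p y g d i * (if g i ω = d then (1:ℝ) else 0)) := by
    intro i ω
    rcases (hp ω).eq_or_lt with h0 | h0
    · rw [← h0]; ring
    · by_cases hg : g i ω = d
      · rw [ynur p hp y g d hnurva hpos i ω h0 hg]
      · simp [hg]
  have key2 : ∀ (i j : Fin N) (ω : Ω),
      p ω * ((y i ω * (if g i ω = d then (1:ℝ) else 0))
        * (y j ω * (if g j ω = d then (1:ℝ) else 0)))
        = p ω * ((epo p y g d i * (if g i ω = d then (1:ℝ) else 0))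
        * (epo p y g d j * (if g j ω = d then (1:ℝ) else 0))) := by
    intro i j ω
    rcases (hp ω).eq_or_lt with h0 | h0
    · rw [← h0]; ring
    · by_cases hg1 : g i ω = d
      · by_cases hg2 : g j ω = d
        · rw [ynur p hp y g d hnurva hpos i ω h0 hg1,
            ynur p hp y g d hnurva hpos j ω h0 hg2]
        · simp [hg2]
      · simp [hg1]
  -- first moment
  have inner1 : ∀ i, (∑ ω, p ω * (y i ω * (if g i ω = d then (1:ℝ) else 0)))
      = epo p y g d i * piP p g d i := by
    intro i
    rw [Finset.sum_congr rfl fun ω _ => key1 i ω, ← piP_eq_sum_ite p g d i,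
      Finset.mul_sum]
    exact Finset.sum_congr rfl fun ω _ => by ring
  have hEX : expec p (ht p y g d) = (1/(N:ℝ)) * ∑ i, epo p y g d i := by
    have step : expec p (ht p y g d)
        = (1/(N:ℝ)) * ∑ i, (∑ ω, p ω * (y i ω * (if g i ω = d then (1:ℝ) else 0)))
            / piP p g d i := by
      simp only [expec, ht, Finset.mul_sum, Finset.sum_div]
      rw [Finset.sum_comm]
      exact Finset.sum_congr rfl fun ω _ => Finset.sum_congr rfl fun i _ => by ring
    rw [step]
    congr 1
    refine Finset.sum_congr rfl fun i _ => ?_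
    rw [inner1 i, mul_div_assoc, div_self (hne i), mul_one]
  -- second moment
  have inner2 : ∀ i j, (∑ ω, p ω * ((y i ω * (if g i ω = d then (1:ℝ) else 0))
        * (y j ω * (if g j ω = d then (1:ℝ) else 0))))
      = piP2 p g d i j * (epo p y g d i * epo p y g d j) := by
    intro i j
    rw [Finset.sum_congr rfl fun ω _ => key2 i j ω, ← piP2_eq_sum_ite p g d i j,
      Finset.sum_mul]
    exact Finset.sum_congr rfl fun ω _ => by ring
  have hEX2 : expec p (fun ω => ht p y g d ω ^ 2)
      = ((N:ℝ)^2)⁻¹ * ∑ i, ∑ j, (piP2 p g d i j / (piP p g d i * piP p g d j))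
          * (epo p y g d i * epo p y g d j) := by
    have hterm2 : ∀ ω, p ω * (ht p y g d ω)^2
        = ((N:ℝ)^2)⁻¹ * ∑ i, ∑ j,
            (p ω * ((y i ω * (if g i ω = d then (1:ℝ) else 0))
              * (y j ω * (if g j ω = d then (1:ℝ) else 0))))
            / (piP p g d i * piP p g d j) := by
      intro ω
      have h1 : (ht p y g d ω)^2
          = (1/(N:ℝ))^2 * ((∑ i, y i ω * (if g i ω = d then (1:ℝ) else 0) / piP p g d i)
            * (∑ j, y j ω * (if g j ω = d then (1:ℝ) else 0) / piP p g d j)) := by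
        rw [ht]; ring
      rw [h1, Finset.sum_mul_sum]
      simp only [Finset.mul_sum]
      exact Finset.sum_congr rfl fun i _ => Finset.sum_congr rfl fun j _ => by ring
    have step : expec p (fun ω => ht p y g d ω ^ 2)
        = ((N:ℝ)^2)⁻¹ * ∑ i, ∑ j,
            (∑ ω, p ω * ((y i ω * (if g i ω = d then (1:ℝ) else 0))
              * (y j ω * (if g j ω = d then (1:ℝ) else 0))))
            / (piP p g d i * piP p g d j) := by
      rw [expec]
      rw [Finset.sum_congr rfl fun ω _ => hterm2 ω, ← Finset.mul_sum]
      congr 1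
      rw [Finset.sum_comm]
      refine Finset.sum_congr rfl fun i _ => ?_
      rw [Finset.sum_comm]
      exact Finset.sum_congr rfl fun j _ => (Finset.sum_div _ _ _).symm
    rw [step]
    congr 1
    refine Finset.sum_congr rfl fun i _ => Finset.sum_congr rfl fun j _ => ?_
    rw [inner2 i j]
    ring
  rw [vari_eq_sub p hps, hEX2, hEX]
  have hsq : ((1/(N:ℝ)) * ∑ i, epo p y g d i)^2
      = ((N:ℝ)^2)⁻¹ * ∑ i, ∑ j, epo p y g d i * epo p y g d j := by
    have h1 : ((1/(N:ℝ)) * ∑ i, epo p y g d i)^2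
        = ((N:ℝ)^2)⁻¹ * ((∑ i, epo p y g d i) * (∑ j, epo p y g d j)) := by ring
    rw [h1, Finset.sum_mul_sum]
  rw [hsq, ← mul_sub, ← Finset.sum_sub_distrib]
  congr 1
  refine Finset.sum_congr rfl fun i _ => ?_
  rw [← Finset.sum_sub_distrib]
  refine Finset.sum_congr rfl fun j _ => ?_
  rw [sub_div, div_self (mul_ne_zero (hne i) (hne j)), sub_mul, one_mul]
end

section
/- Under NURVA, individual positivity (π_i(d) > 0 for every i), and joint positivity (π_ij(d) > 0 for every pair i, j), the Horvitz–Thompson variance estimator V̂_HT(ω) = N^{-2} ∑_{i=1}^N ∑_{j=1}^N ((π_ij(d) − π_i(d) π_j(d)) / (π_i(d) π_j(d))) · y_i(ω) y_j(ω) · 1[g_i(ω)=d and g_j(ω)=d] / π_ij(d) is unbiased for the variance of the Horvitz–Thompson estimator: E[V̂_HT] = Var[ŷ(d)]. -/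
open Finset

lemma swap1 {Ω : Type*} [Fintype Ω] {N : ℕ} (p : Ω → ℝ) (k : ℝ)
    (f : Fin N → Ω → ℝ) :
    (∑ ω, p ω * (k * ∑ i, f i ω)) = k * ∑ i, ∑ ω, p ω * f i ω := by
  simp only [Finset.mul_sum]
  rw [Finset.sum_comm]
  exact Finset.sum_congr rfl fun i _ => Finset.sum_congr rfl fun ω _ => by ring

lemma swap2 {Ω : Type*} [Fintype Ω] {N : ℕ} (p : Ω → ℝ) (k : ℝ)
    (f : Fin N → Fin N → Ω → ℝ) :
    (∑ ω, p ω * (k * ∑ i, ∑ j, f i j ω)) = k * ∑ i, ∑ j, ∑ ω, p ω * f i j ω := by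
  simp only [Finset.mul_sum]
  rw [Finset.sum_comm]
  refine Finset.sum_congr rfl fun i _ => ?_
  rw [Finset.sum_comm]
  exact Finset.sum_congr rfl fun j _ => Finset.sum_congr rfl fun ω _ => by ring

lemma vari_aux {Ω : Type*} [Fintype Ω] (p : Ω → ℝ) (hps : ∑ ω, p ω = 1) (X : Ω → ℝ)
    (m : ℝ) :
    (∑ ω, p ω * (X ω - m) ^ 2)
      = (∑ ω, p ω * X ω ^ 2) - 2 * m * (∑ ω, p ω * X ω) + m ^ 2 := by
  have h : ∑ ω, p ω * (X ω - m) ^ 2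
      = (∑ ω, p ω * X ω ^ 2) - 2 * m * (∑ ω, p ω * X ω) + m ^ 2 * (∑ ω, p ω) := by
    rw [Finset.mul_sum, Finset.mul_sum, ← Finset.sum_sub_distrib, ← Finset.sum_add_distrib]
    exact Finset.sum_congr rfl fun ω _ => by ring
  rw [h, hps, mul_one]

lemma vari_eq' {Ω : Type*} [Fintype Ω] (p : Ω → ℝ) (hps : ∑ ω, p ω = 1) (X : Ω → ℝ) :
    (∑ ω, p ω * (X ω - ∑ ω', p ω' * X ω') ^ 2)
      = (∑ ω, p ω * X ω ^ 2) - (∑ ω, p ω * X ω) ^ 2 := by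
  rw [vari_aux p hps X _]
  ring

/-- Under NURVA, individual positivity, and joint positivity, the
Horvitz–Thompson variance estimator is unbiased for the variance of the
Horvitz–Thompson estimator: `E[V̂_HT] = Var[ŷ(d)]`. -/
theorem ht_variance_estimator_unbiased {Ω E : Type*} [Fintype Ω] [Nonempty Ω] [DecidableEq E]
    {N : ℕ} (hN : 1 ≤ N)
    (p : Ω → ℝ) (hp : ∀ ω, 0 ≤ p ω) (hps : ∑ ω, p ω = 1)
    (y : Fin N → Ω → ℝ) (g : Fin N → Ω → E) (d : E)
    (hnurva : NURVA p y g)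
    (hpos : ∀ i : Fin N, 0 < piP p g d i)
    (hjoint : ∀ i j : Fin N, 0 < piP2 p g d i j) :
    expec p (fun ω => ((N : ℝ) ^ 2)⁻¹ * ∑ i : Fin N, ∑ j : Fin N,
        ((piP2 p g d i j - piP p g d i * piP p g d j) / (piP p g d i * piP p g d j))
          * (y i ω * y j ω)
          * (if g i ω = d ∧ g j ω = d then (1 : ℝ) else 0) / piP2 p g d i j)
      = vari p (ht p y g d) := by
  classical
  -- witnesses for constancy of y on positive-probability exposure events
  have hwit : ∀ i : Fin N, ∃ ω, 0 < p ω ∧ g i ω = d := by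
    intro i
    by_contra h
    push_neg at h
    have hz : piP p g d i = 0 := by
      unfold piP
      refine Finset.sum_eq_zero fun ω hω => ?_
      simp only [Finset.mem_filter] at hω
      rcases (hp ω).lt_or_eq with hlt | heq
      · exact absurd hω.2 (h ω hlt)
      · exact heq.symm
    exact absurd hz (hpos i).ne'
  choose w hw hwg using hwit
  set c : Fin N → ℝ := fun i => y i (w i) with hcdef
  have hc : ∀ (i : Fin N) (ω : Ω), 0 < p ω → g i ω = d → y i ω = c i := by
    intro i ω hpω hgω
    exact hnurva ω (w i) hpω (hw i) i (by rw [hgω, hwg i])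
  have hind : ∀ (i j : Fin N) (ω : Ω),
      (if g i ω = d then (1:ℝ) else 0) * (if g j ω = d then (1:ℝ) else 0)
        = (if g i ω = d ∧ g j ω = d then (1:ℝ) else 0) := by
    intro i j ω
    by_cases h1 : g i ω = d <;> by_cases h2 : g j ω = d <;> simp [h1, h2]
  -- key moment identities
  have H1 : ∀ i : Fin N,
      (∑ ω, p ω * (y i ω * (if g i ω = d then (1:ℝ) else 0))) = c i * piP p g d i := by
    intro i
    have step : ∀ ω : Ω, p ω * (y i ω * (if g i ω = d then (1:ℝ) else 0))
        = (if g i ω = d then c i * p ω else 0) := by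
      intro ω
      by_cases hg : g i ω = d
      · rcases (hp ω).lt_or_eq with hlt | heq
        · simp [hg, hc i ω hlt hg, mul_comm]
        · simp [hg, ← heq]
      · simp [hg]
    rw [Finset.sum_congr rfl fun ω _ => step ω]
    rw [Finset.sum_ite, Finset.sum_const_zero, add_zero, ← Finset.mul_sum]
    rfl
  have H2 : ∀ i j : Fin N,
      (∑ ω, p ω * (y i ω * y j ω * (if g i ω = d ∧ g j ω = d then (1:ℝ) else 0)))
        = c i * c j * piP2 p g d i j := by
    intro i j
    have step : ∀ ω : Ω, p ω * (y i ω * y j ω * (if g i ω = d ∧ g j ω = d then (1:ℝ) else 0))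
        = (if g i ω = d ∧ g j ω = d then c i * c j * p ω else 0) := by
      intro ω
      by_cases hg : g i ω = d ∧ g j ω = d
      · rcases (hp ω).lt_or_eq with hlt | heq
        · simp [hg, hc i ω hlt hg.1, hc j ω hlt hg.2]; ring
        · simp [hg, ← heq]
      · simp [hg]
    rw [Finset.sum_congr rfl fun ω _ => step ω]
    rw [Finset.sum_ite, Finset.sum_const_zero, add_zero, ← Finset.mul_sum]
    rfl
  -- expectation of the HT estimator
  have hE : expec p (ht p y g d) = (1 / (N:ℝ)) * ∑ i, c i := by
    unfold expec ht
    rw [swap1 p (1 / (N:ℝ)) (fun i ω => y i ω * (if g i ω = d then (1:ℝ) else 0) / piP p g d i)]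
    congr 1
    refine Finset.sum_congr rfl fun i _ => ?_
    have : (∑ ω, p ω * (y i ω * (if g i ω = d then (1:ℝ) else 0) / piP p g d i))
        = (∑ ω, p ω * (y i ω * (if g i ω = d then (1:ℝ) else 0))) / piP p g d i := by
      rw [Finset.sum_div]
      exact Finset.sum_congr rfl fun ω _ => by ring
    rw [this, H1 i, mul_div_assoc, div_self (hpos i).ne', mul_one]
  -- second moment of the HT estimator
  have hE2 : expec p (fun ω => ht p y g d ω ^ 2)
      = ((N:ℝ) ^ 2)⁻¹ * ∑ i, ∑ j, c i * c j * (piP2 p g d i j / (piP p g d i * piP p g d j)) := by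
    have hsq : ∀ ω : Ω, ht p y g d ω ^ 2
        = ((N:ℝ) ^ 2)⁻¹ * ∑ i, ∑ j,
            (y i ω * y j ω * (if g i ω = d ∧ g j ω = d then (1:ℝ) else 0))
              / (piP p g d i * piP p g d j) := by
      intro ω
      unfold ht
      rw [mul_pow, sq (∑ i, y i ω * (if g i ω = d then (1:ℝ) else 0) / piP p g d i),
        Finset.sum_mul_sum]
      rw [show ((1:ℝ) / (N:ℝ)) ^ 2 = ((N:ℝ) ^ 2)⁻¹ by rw [div_pow, one_pow, one_div]]
      congr 1
      refine Finset.sum_congr rfl fun i _ => Finset.sum_congr rfl fun j _ => ?_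
      rw [div_mul_div_comm, ← hind i j ω]
      ring
    unfold expec
    simp only [hsq]
    rw [swap2 p (((N:ℝ) ^ 2)⁻¹) (fun i j ω =>
      (y i ω * y j ω * (if g i ω = d ∧ g j ω = d then (1:ℝ) else 0))
        / (piP p g d i * piP p g d j))]
    congr 1
    refine Finset.sum_congr rfl fun i _ => Finset.sum_congr rfl fun j _ => ?_
    have : (∑ ω, p ω * ((y i ω * y j ω * (if g i ω = d ∧ g j ω = d then (1:ℝ) else 0))
        / (piP p g d i * piP p g d j)))
        = (∑ ω, p ω * (y i ω * y j ω * (if g i ω = d ∧ g j ω = d then (1:ℝ) else 0)))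
            / (piP p g d i * piP p g d j) := by
      rw [Finset.sum_div]
      exact Finset.sum_congr rfl fun ω _ => by ring
    rw [this, H2 i j, mul_div_assoc]
  -- expectation of the variance estimator
  have hL : expec p (fun ω => ((N : ℝ) ^ 2)⁻¹ * ∑ i : Fin N, ∑ j : Fin N,
        ((piP2 p g d i j - piP p g d i * piP p g d j) / (piP p g d i * piP p g d j))
          * (y i ω * y j ω)
          * (if g i ω = d ∧ g j ω = d then (1 : ℝ) else 0) / piP2 p g d i j)
      = ((N:ℝ) ^ 2)⁻¹ * ∑ i, ∑ j, c i * c j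
          * ((piP2 p g d i j - piP p g d i * piP p g d j) / (piP p g d i * piP p g d j)) := by
    unfold expec
    rw [swap2 p (((N:ℝ) ^ 2)⁻¹) (fun i j ω =>
      ((piP2 p g d i j - piP p g d i * piP p g d j) / (piP p g d i * piP p g d j))
        * (y i ω * y j ω)
        * (if g i ω = d ∧ g j ω = d then (1 : ℝ) else 0) / piP2 p g d i j)]
    congr 1
    refine Finset.sum_congr rfl fun i _ => Finset.sum_congr rfl fun j _ => ?_
    have hrw : (∑ ω, p ω * (((piP2 p g d i j - piP p g d i * piP p g d j)
          / (piP p g d i * piP p g d j)) * (y i ω * y j ω)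
          * (if g i ω = d ∧ g j ω = d then (1 : ℝ) else 0) / piP2 p g d i j))
        = ((piP2 p g d i j - piP p g d i * piP p g d j)
          / (piP p g d i * piP p g d j)) / piP2 p g d i j
            * (∑ ω, p ω * (y i ω * y j ω * (if g i ω = d ∧ g j ω = d then (1:ℝ) else 0))) := by
      rw [Finset.mul_sum]
      exact Finset.sum_congr rfl fun ω _ => by ring
    rw [hrw, H2 i j]
    have h1 := (hpos i).ne'
    have h2 := (hpos j).ne'
    have h3 := (hjoint i j).ne'
    field_simp
  rw [hL]
  -- variance side
  have hvari : vari p (ht p y g d)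
      = expec p (fun ω => ht p y g d ω ^ 2) - (expec p (ht p y g d)) ^ 2 := by
    unfold vari expec
    exact vari_eq' p hps (ht p y g d)
  rw [hvari, hE2, hE, mul_pow, sq (∑ i, c i), Finset.sum_mul_sum]
  rw [show ((1:ℝ) / (N:ℝ)) ^ 2 = ((N:ℝ) ^ 2)⁻¹ by rw [div_pow, one_pow, one_div]]
  rw [← mul_sub, ← Finset.sum_sub_distrib]
  congr 1
  refine Finset.sum_congr rfl fun i _ => ?_
  rw [← Finset.sum_sub_distrib]
  refine Finset.sum_congr rfl fun j _ => ?_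
  have h1 := (hpos i).ne'
  have h2 := (hpos j).ne'
  field_simp
end

section
/- Under NURVA and individual positivity (π_i(d) > 0 for every unit i), the conservative variance estimator V̂_C(ω) = N^{-2} ∑_{i,j : π_ij(d) > 0} ((π_ij(d) − π_i(d) π_j(d)) / (π_i(d) π_j(d))) y_i(ω) y_j(ω) 1[g_i(ω)=d and g_j(ω)=d] / π_ij(d) + N^{-2} ∑_{i,j : π_ij(d) = 0} ( (y_i(ω)²/2) · 1[g_i(ω)=d]/π_i(d) + (y_j(ω)²/2) · 1[g_j(ω)=d]/π_j(d) ) is conservative: E[V̂_C] ≥ Var[ŷ(d)]. -/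
open Finset

section Helpers

variable {Ω E : Type*} [Fintype Ω] [DecidableEq E] {N : ℕ}

lemma expec_congr (p : Ω → ℝ) {X X' : Ω → ℝ} (h : ∀ ω, p ω ≠ 0 → X ω = X' ω) :
    expec p X = expec p X' := by
  refine Finset.sum_congr rfl fun ω _ => ?_
  rcases eq_or_ne (p ω) 0 with h0 | h0
  · simp [h0]
  · rw [h ω h0]

lemma expec_smul (p : Ω → ℝ) (a : ℝ) (X : Ω → ℝ) :
    expec p (fun ω => a * X ω) = a * expec p X := by
  unfold expec
  rw [Finset.mul_sum]
  exact Finset.sum_congr rfl fun _ _ => by ring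

lemma expec_add (p : Ω → ℝ) (X Y : Ω → ℝ) :
    expec p (fun ω => X ω + Y ω) = expec p X + expec p Y := by
  unfold expec
  rw [← Finset.sum_add_distrib]
  exact Finset.sum_congr rfl fun _ _ => by ring

lemma expec_sum (p : Ω → ℝ) {ι : Type*} (s : Finset ι) (f : ι → Ω → ℝ) :
    expec p (fun ω => ∑ i ∈ s, f i ω) = ∑ i ∈ s, expec p (f i) := by
  unfold expec
  rw [Finset.sum_comm]
  exact Finset.sum_congr rfl fun _ _ => Finset.mul_sum _ _ _

lemma expec_I (p : Ω → ℝ) (g : Fin N → Ω → E) (d : E) (i : Fin N) :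
    expec p (fun ω => if g i ω = d then (1 : ℝ) else 0) = piP p g d i := by
  unfold expec piP
  rw [Finset.sum_filter]
  exact Finset.sum_congr rfl fun ω _ => by by_cases h : g i ω = d <;> simp [h]

lemma expec_II (p : Ω → ℝ) (g : Fin N → Ω → E) (d : E) (i j : Fin N) :
    expec p (fun ω => if g i ω = d ∧ g j ω = d then (1 : ℝ) else 0) = piP2 p g d i j := by
  unfold expec piP2
  rw [Finset.sum_filter]
  exact Finset.sum_congr rfl fun ω _ => by by_cases h : g i ω = d ∧ g j ω = d <;> simp [h]

lemma piP2_nonneg (p : Ω → ℝ) (hp : ∀ ω, 0 ≤ p ω) (g : Fin N → Ω → E) (d : E) (i j : Fin N) :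
    0 ≤ piP2 p g d i j :=
  Finset.sum_nonneg fun ω _ => hp ω

lemma vari_eq (p : Ω → ℝ) (hps : ∑ ω, p ω = 1) (X : Ω → ℝ) :
    vari p X = expec p (fun ω => X ω ^ 2) - (expec p X) ^ 2 := by
  unfold vari
  set m := expec p X with hm
  unfold expec
  have : ∑ ω, p ω * (X ω - m) ^ 2
      = ∑ ω, (p ω * X ω ^ 2 - 2 * m * (p ω * X ω) + m ^ 2 * p ω) :=
    Finset.sum_congr rfl fun _ _ => by ring
  rw [this, Finset.sum_add_distrib, Finset.sum_sub_distrib, ← Finset.mul_sum, ← Finset.mul_sum,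
    hps]
  have hmx : ∑ ω, p ω * X ω = m := rfl
  rw [hmx]; ring

lemma nurva_key (p : Ω → ℝ) (hp : ∀ ω, 0 ≤ p ω)
    (y : Fin N → Ω → ℝ) (g : Fin N → Ω → E) (d : E) (hnurva : NURVA p y g)
    (i : Fin N) (hpi : 0 < piP p g d i) :
    ∀ ω, p ω ≠ 0 → g i ω = d → y i ω = epo p y g d i := by
  obtain ⟨ω₀, hmem, hω₀⟩ : ∃ ω₀ ∈ Finset.univ.filter (fun ω => g i ω = d), 0 < p ω₀ := by
    by_contra hcon
    push_neg at hcon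
    have : piP p g d i = 0 :=
      Finset.sum_eq_zero fun ω hω => le_antisymm (hcon ω hω) (hp ω)
    exact absurd this (ne_of_gt hpi)
  have hg₀ : g i ω₀ = d := (Finset.mem_filter.mp hmem).2
  intro ω hω hgω
  have hpω : 0 < p ω := lt_of_le_of_ne (hp ω) (Ne.symm hω)
  have hy : y i ω = y i ω₀ := hnurva ω ω₀ hpω hω₀ i (by rw [hgω, hg₀])
  have hA : (∑ ω' ∈ Finset.univ.filter (fun ω' => g i ω' = d), y i ω' * p ω')
      = y i ω₀ * piP p g d i := by
    rw [piP, Finset.mul_sum]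
    refine Finset.sum_congr rfl fun ω' hω' => ?_
    rcases eq_or_ne (p ω') 0 with h0 | h0
    · simp [h0]
    · have hpω' : 0 < p ω' := lt_of_le_of_ne (hp ω') (Ne.symm h0)
      have hg' : g i ω' = d := (Finset.mem_filter.mp hω').2
      rw [hnurva ω' ω₀ hpω' hω₀ i (by rw [hg', hg₀])]
  rw [epo, hA, mul_div_assoc, div_self (ne_of_gt hpi), mul_one, hy]

end Helpers

/-- Under NURVA and individual positivity, the conservative variance
estimator `V̂_C` (Horvitz–Thompson terms on pairs with `π_ij(d) > 0`, Young-inequality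
bound terms on pairs with `π_ij(d) = 0`) is conservative: `E[V̂_C] ≥ Var[ŷ(d)]`. -/
theorem conservative_variance_estimator {Ω E : Type*} [Fintype Ω] [Nonempty Ω] [DecidableEq E]
    {N : ℕ} (hN : 1 ≤ N)
    (p : Ω → ℝ) (hp : ∀ ω, 0 ≤ p ω) (hps : ∑ ω, p ω = 1)
    (y : Fin N → Ω → ℝ) (g : Fin N → Ω → E) (d : E)
    (hnurva : NURVA p y g)
    (hpos : ∀ i : Fin N, 0 < piP p g d i) :
    vari p (ht p y g d)
      ≤ expec p (fun ω => ((N : ℝ) ^ 2)⁻¹ * ∑ i : Fin N, ∑ j : Fin N,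
          if 0 < piP2 p g d i j then
            ((piP2 p g d i j - piP p g d i * piP p g d j) / (piP p g d i * piP p g d j))
              * (y i ω * y j ω)
              * (if g i ω = d ∧ g j ω = d then (1 : ℝ) else 0) / piP2 p g d i j
          else
            (y i ω ^ 2 / 2) * (if g i ω = d then (1 : ℝ) else 0) / piP p g d i
              + (y j ω ^ 2 / 2) * (if g j ω = d then (1 : ℝ) else 0) / piP p g d j) := by
  classical
  set c : Fin N → ℝ := epo p y g d with hc
  have hkey : ∀ (i : Fin N) (ω : Ω), p ω ≠ 0 → g i ω = d → y i ω = c i := by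
    intro i ω hω h
    rw [hc]
    exact nurva_key p hp y g d hnurva i (hpos i) ω hω h
  have hI2 : ∀ (i j : Fin N) (ω : Ω),
      (if g i ω = d then (1 : ℝ) else 0) * (if g j ω = d then (1 : ℝ) else 0)
        = (if g i ω = d ∧ g j ω = d then (1 : ℝ) else 0) := by
    intro i j ω
    by_cases h1 : g i ω = d <;> by_cases h2 : g j ω = d <;> simp [h1, h2]
  -- E[ht]
  have hE1 : expec p (ht p y g d) = (1 / (N : ℝ)) * ∑ i, c i := by
    have h1 : expec p (ht p y g d)
        = expec p (fun ω => (1 / (N : ℝ)) * ∑ i,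
            (c i / piP p g d i) * (if g i ω = d then (1 : ℝ) else 0)) := by
      refine expec_congr p fun ω hω => ?_
      unfold ht
      congr 1
      refine Finset.sum_congr rfl fun i _ => ?_
      by_cases h : g i ω = d
      · rw [hkey i ω hω h]; ring
      · simp [h]
    rw [h1, expec_smul, expec_sum]
    congr 1
    refine Finset.sum_congr rfl fun i _ => ?_
    rw [expec_smul, expec_I, div_mul_cancel₀ _ (ne_of_gt (hpos i))]
  -- E[ht^2]
  have hE2 : expec p (fun ω => ht p y g d ω ^ 2)
      = (1 / (N : ℝ)) ^ 2 * ∑ i, ∑ j,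
          c i * c j / (piP p g d i * piP p g d j) * piP2 p g d i j := by
    have h1 : expec p (fun ω => ht p y g d ω ^ 2)
        = expec p (fun ω => (1 / (N : ℝ)) ^ 2 * ∑ i, ∑ j,
            (c i * c j / (piP p g d i * piP p g d j)) *
              (if g i ω = d ∧ g j ω = d then (1 : ℝ) else 0)) := by
      refine expec_congr p fun ω hω => ?_
      unfold ht
      rw [mul_pow]
      congr 1
      rw [pow_two, Finset.sum_mul_sum]
      refine Finset.sum_congr rfl fun i _ => ?_
      refine Finset.sum_congr rfl fun j _ => ?_
      rw [← hI2 i j ω]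
      by_cases h : g i ω = d
      · by_cases h' : g j ω = d
        · rw [hkey i ω hω h, hkey j ω hω h']; ring
        · simp [h']
      · simp [h]
    rw [h1, expec_smul]
    congr 1
    rw [expec_sum]
    refine Finset.sum_congr rfl fun i _ => ?_
    rw [expec_sum]
    refine Finset.sum_congr rfl fun j _ => ?_
    rw [expec_smul, expec_II]
  -- E[RHS]
  have hE3 : expec p (fun ω => ((N : ℝ) ^ 2)⁻¹ * ∑ i : Fin N, ∑ j : Fin N,
          if 0 < piP2 p g d i j then
            ((piP2 p g d i j - piP p g d i * piP p g d j) / (piP p g d i * piP p g d j))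
              * (y i ω * y j ω)
              * (if g i ω = d ∧ g j ω = d then (1 : ℝ) else 0) / piP2 p g d i j
          else
            (y i ω ^ 2 / 2) * (if g i ω = d then (1 : ℝ) else 0) / piP p g d i
              + (y j ω ^ 2 / 2) * (if g j ω = d then (1 : ℝ) else 0) / piP p g d j)
      = ((N : ℝ) ^ 2)⁻¹ * ∑ i : Fin N, ∑ j : Fin N,
          (if 0 < piP2 p g d i j then
            ((piP2 p g d i j - piP p g d i * piP p g d j) / (piP p g d i * piP p g d j))
              * (c i * c j)
          else c i ^ 2 / 2 + c j ^ 2 / 2) := by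
    rw [expec_smul]
    congr 1
    rw [expec_sum]
    refine Finset.sum_congr rfl fun i _ => ?_
    rw [expec_sum]
    refine Finset.sum_congr rfl fun j _ => ?_
    by_cases hij : 0 < piP2 p g d i j
    · simp only [if_pos hij]
      have heq : expec p (fun ω =>
            ((piP2 p g d i j - piP p g d i * piP p g d j) / (piP p g d i * piP p g d j))
              * (y i ω * y j ω)
              * (if g i ω = d ∧ g j ω = d then (1 : ℝ) else 0) / piP2 p g d i j)
          = expec p (fun ω =>
            (((piP2 p g d i j - piP p g d i * piP p g d j) / (piP p g d i * piP p g d j))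
              * (c i * c j) / piP2 p g d i j)
              * (if g i ω = d ∧ g j ω = d then (1 : ℝ) else 0)) := by
        refine expec_congr p fun ω hω => ?_
        by_cases h : g i ω = d ∧ g j ω = d
        · simp only [if_pos h]
          rw [hkey i ω hω h.1, hkey j ω hω h.2]
          ring
        · simp [h]
      rw [heq, expec_smul, expec_II, div_mul_cancel₀ _ (ne_of_gt hij)]
    · simp only [if_neg hij]
      have heq : expec p (fun ω =>
            (y i ω ^ 2 / 2) * (if g i ω = d then (1 : ℝ) else 0) / piP p g d i
              + (y j ω ^ 2 / 2) * (if g j ω = d then (1 : ℝ) else 0) / piP p g d j)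
          = expec p (fun ω =>
            (c i ^ 2 / 2 / piP p g d i) * (if g i ω = d then (1 : ℝ) else 0)
              + (c j ^ 2 / 2 / piP p g d j) * (if g j ω = d then (1 : ℝ) else 0)) := by
        refine expec_congr p fun ω hω => ?_
        congr 1
        · by_cases h : g i ω = d
          · rw [hkey i ω hω h]; ring
          · simp [h]
        · by_cases h : g j ω = d
          · rw [hkey j ω hω h]; ring
          · simp [h]
      rw [heq, expec_add, expec_smul, expec_smul, expec_I, expec_I,
        div_mul_cancel₀ _ (ne_of_gt (hpos i)), div_mul_cancel₀ _ (ne_of_gt (hpos j))]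
  -- assemble
  rw [vari_eq p hps, hE1, hE2, hE3]
  have hNpos : (0 : ℝ) < (N : ℝ) := by
    have : (0 : ℕ) < N := hN
    exact_mod_cast this
  have hinv : (1 / (N : ℝ)) ^ 2 = ((N : ℝ) ^ 2)⁻¹ := by
    rw [one_div, inv_pow]
  rw [mul_pow, pow_two ((∑ i, c i)), Finset.sum_mul_sum, hinv, ← mul_sub,
    ← Finset.sum_sub_distrib]
  have hsub : ∀ i : Fin N, (∑ j, c i * c j / (piP p g d i * piP p g d j) * piP2 p g d i j)
      - ∑ j, c i * c j
      = ∑ j, (c i * c j / (piP p g d i * piP p g d j) * piP2 p g d i j - c i * c j) := by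
    intro i; rw [Finset.sum_sub_distrib]
  refine mul_le_mul_of_nonneg_left ?_ (inv_nonneg.mpr (by positivity))
  calc (∑ i, ((∑ j, c i * c j / (piP p g d i * piP p g d j) * piP2 p g d i j)
          - ∑ j, c i * c j))
      = ∑ i, ∑ j, (c i * c j / (piP p g d i * piP p g d j) * piP2 p g d i j - c i * c j) :=
        Finset.sum_congr rfl fun i _ => hsub i
    _ ≤ _ := by
        refine Finset.sum_le_sum fun i _ => Finset.sum_le_sum fun j _ => ?_
        by_cases hij : 0 < piP2 p g d i j
        · rw [if_pos hij]
          apply le_of_eq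
          have hi := ne_of_gt (hpos i)
          have hj := ne_of_gt (hpos j)
          field_simp
        · rw [if_neg hij]
          have hz : piP2 p g d i j = 0 :=
            le_antisymm (not_lt.mp hij) (piP2_nonneg p hp g d i j)
          rw [hz]
          nlinarith [sq_nonneg (c i + c j)]
end

section
/- Under NURVA and individual positivity (π_i(d) > 0 for every unit i), if there is a constant c > 0 with |ȳ_i(d)| / π_i(d) ≤ c for every unit i, then Var[ŷ(d)] ≤ c² b / N², where b = ∑_{i=1}^N ∑_{j=1}^N |π_ij(d) − π_i(d) π_j(d)|. -/
open Finset

/-- Under NURVA and individual positivity, if `|ȳ_i(d)|/π_i(d) ≤ c` for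
every unit `i` (with `c > 0`), then `Var[ŷ(d)] ≤ c² b / N²`, where
`b = ∑_i ∑_j |π_ij(d) − π_i(d)π_j(d)|`. -/
theorem ht_variance_bound {Ω E : Type*} [Fintype Ω] [Nonempty Ω] [DecidableEq E]
    {N : ℕ} (hN : 1 ≤ N)
    (p : Ω → ℝ) (hp : ∀ ω, 0 ≤ p ω) (hps : ∑ ω, p ω = 1)
    (y : Fin N → Ω → ℝ) (g : Fin N → Ω → E) (d : E)
    (hnurva : NURVA p y g)
    (hpos : ∀ i : Fin N, 0 < piP p g d i)
    (c : ℝ) (hc : 0 < c)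
    (hbound : ∀ i : Fin N, |epo p y g d i| / piP p g d i ≤ c) :
    vari p (ht p y g d)
      ≤ c ^ 2 * (∑ i : Fin N, ∑ j : Fin N, |piP2 p g d i j - piP p g d i * piP p g d j|)
          / (N : ℝ) ^ 2 := by
  classical
  set a : Fin N → ℝ := fun i => epo p y g d i / piP p g d i with ha
  set χ : Fin N → Ω → ℝ := fun i ω => if g i ω = d then (1:ℝ) else 0 with hχ
  set H : Ω → ℝ := fun ω => (1 / (N:ℝ)) * ∑ i, a i * χ i ω with hH
  have key : ∀ ω, 0 < p ω → ∀ i : Fin N, g i ω = d → y i ω = epo p y g d i := by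
    intro ω hω i hgi
    have hnum : ∑ ω' ∈ Finset.univ.filter (fun ω' => g i ω' = d), y i ω' * p ω'
        = y i ω * piP p g d i := by
      rw [piP, Finset.mul_sum]
      refine Finset.sum_congr rfl ?_
      intro ω' hω'
      simp only [Finset.mem_filter] at hω'
      rcases (hp ω').lt_or_eq with h0 | h0
      · rw [hnurva ω' ω h0 hω i (by rw [hω'.2, hgi])]
      · rw [← h0]; ring
    rw [epo, hnum, mul_div_assoc, div_self (hpos i).ne', mul_one]
  have hteq : ∀ ω, 0 < p ω → ht p y g d ω = H ω := by
    intro ω hω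
    simp only [ht, hH]
    congr 1
    refine Finset.sum_congr rfl ?_
    intro i _
    by_cases hgi : g i ω = d
    · rw [key ω hω i hgi]
      simp only [ha, hχ, if_pos hgi, mul_one, div_eq_mul_inv]
    · simp [hχ, hgi]
  have hmul : ∀ (X Y : Ω → ℝ), (∀ ω, 0 < p ω → X ω = Y ω) → expec p X = expec p Y := by
    intro X Y hXY
    refine Finset.sum_congr rfl ?_
    intro ω _
    rcases (hp ω).lt_or_eq with h0 | h0
    · rw [hXY ω h0]
    · rw [← h0]; ring
  have hvari : vari p (ht p y g d) = vari p H := by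
    have hE : expec p (ht p y g d) = expec p H := hmul _ _ hteq
    unfold vari
    rw [hE]
    exact hmul _ _ (fun ω hω => by rw [hteq ω hω])
  rw [hvari]
  have hEχ : ∀ i, (∑ ω, p ω * χ i ω) = piP p g d i := by
    intro i
    rw [piP, Finset.sum_filter]
    refine Finset.sum_congr rfl fun ω _ => ?_
    by_cases h : g i ω = d <;> simp [hχ, h]
  have hEχ2 : ∀ i j, (∑ ω, p ω * (χ i ω * χ j ω)) = piP2 p g d i j := by
    intro i j
    rw [piP2, Finset.sum_filter]
    refine Finset.sum_congr rfl fun ω _ => ?_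
    by_cases h1 : g i ω = d <;> by_cases h2 : g j ω = d <;> simp [hχ, h1, h2]
  have hsq : ∀ (f : Fin N → ℝ), (∑ i, f i)^2 = ∑ i, ∑ j, f i * f j := fun f => by
    rw [sq, Finset.sum_mul_sum]
  have hmean : (∑ ω, p ω * H ω) = (1/(N:ℝ)) * ∑ i, a i * piP p g d i := by
    rw [show (1/(N:ℝ)) * ∑ i, a i * piP p g d i
        = ∑ i, ∑ ω, (1/(N:ℝ)) * (a i * (p ω * χ i ω)) from by
      rw [Finset.mul_sum]
      refine Finset.sum_congr rfl fun i _ => ?_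
      rw [← hEχ i, Finset.mul_sum, Finset.mul_sum]]
    rw [show (∑ ω, p ω * H ω) = ∑ ω, ∑ i, (1/(N:ℝ)) * (a i * (p ω * χ i ω)) from
      Finset.sum_congr rfl fun ω _ => by
        simp only [hH, Finset.mul_sum]
        exact Finset.sum_congr rfl fun i _ => by ring]
    exact Finset.sum_comm
  have hcov : ∀ i j, (∑ ω, p ω * ((χ i ω - piP p g d i) * (χ j ω - piP p g d j)))
      = piP2 p g d i j - piP p g d i * piP p g d j := by
    intro i j
    rw [show (∑ ω, p ω * ((χ i ω - piP p g d i) * (χ j ω - piP p g d j)))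
        = (∑ ω, p ω * (χ i ω * χ j ω)) - piP p g d j * (∑ ω, p ω * χ i ω)
          - piP p g d i * (∑ ω, p ω * χ j ω) + piP p g d i * piP p g d j * (∑ ω, p ω) from by
      rw [Finset.mul_sum, Finset.mul_sum, Finset.mul_sum, ← Finset.sum_sub_distrib,
        ← Finset.sum_sub_distrib, ← Finset.sum_add_distrib]
      exact Finset.sum_congr rfl fun ω _ => by ring]
    rw [hEχ2, hEχ, hEχ, hps]
    ring
  have hvarH : vari p H = (1/(N:ℝ))^2 * ∑ i, ∑ j, a i * a j *
      (piP2 p g d i j - piP p g d i * piP p g d j) := by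
    unfold vari expec
    beta_reduce
    rw [show (1/(N:ℝ))^2 * ∑ i, ∑ j, a i * a j * (piP2 p g d i j - piP p g d i * piP p g d j)
        = ∑ i, ∑ j, ∑ ω, (1/(N:ℝ))^2 * (a i * a j *
            (p ω * ((χ i ω - piP p g d i) * (χ j ω - piP p g d j)))) from by
      rw [Finset.mul_sum]
      refine Finset.sum_congr rfl fun i _ => ?_
      rw [Finset.mul_sum]
      refine Finset.sum_congr rfl fun j _ => ?_
      rw [← hcov i j, Finset.mul_sum, Finset.mul_sum]]
    rw [show (∑ ω, p ω * (H ω - ∑ ω', p ω' * H ω') ^ 2)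
        = ∑ ω, ∑ i, ∑ j, (1/(N:ℝ))^2 * (a i * a j *
            (p ω * ((χ i ω - piP p g d i) * (χ j ω - piP p g d j)))) from
      Finset.sum_congr rfl fun ω _ => by
        rw [hmean]
        simp only [hH]
        rw [← mul_sub, ← Finset.sum_sub_distrib, mul_pow, hsq, Finset.mul_sum, Finset.mul_sum]
        refine Finset.sum_congr rfl fun i _ => ?_
        rw [Finset.mul_sum, Finset.mul_sum]
        exact Finset.sum_congr rfl fun j _ => by ring]
    rw [Finset.sum_comm]
    exact Finset.sum_congr rfl fun i _ => Finset.sum_comm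
  rw [hvarH]
  have hac : ∀ i, |a i| ≤ c := by
    intro i
    rw [ha]
    simp only
    rw [abs_div, abs_of_pos (hpos i)]
    exact hbound i
  have hS : (∑ i, ∑ j, a i * a j * (piP2 p g d i j - piP p g d i * piP p g d j))
      ≤ c ^ 2 * ∑ i, ∑ j, |piP2 p g d i j - piP p g d i * piP p g d j| := by
    rw [Finset.mul_sum]
    refine Finset.sum_le_sum fun i _ => ?_
    rw [Finset.mul_sum]
    refine Finset.sum_le_sum fun j _ => ?_
    calc a i * a j * (piP2 p g d i j - piP p g d i * piP p g d j)
        ≤ |a i * a j * (piP2 p g d i j - piP p g d i * piP p g d j)| := le_abs_self _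
      _ = |a i| * |a j| * |piP2 p g d i j - piP p g d i * piP p g d j| := by
          rw [abs_mul, abs_mul]
      _ ≤ c * c * |piP2 p g d i j - piP p g d i * piP p g d j| := by
          refine mul_le_mul_of_nonneg_right ?_ (abs_nonneg _)
          exact mul_le_mul (hac i) (hac j) (abs_nonneg _) hc.le
      _ = c ^ 2 * |piP2 p g d i j - piP p g d i * piP p g d j| := by ring
  have hN2 : (0:ℝ) < (N:ℝ)^2 := by positivity
  rw [one_div, inv_pow, ← div_eq_inv_mul]
  exact div_le_div_of_nonneg_right hS hN2.le
end

section
/- Unbiased covariate adjustment without NURVA: suppose π_i(d) > 0 for every unit i, and let f : Fin N → Ω → ℝ be random prediction values satisfying the independence condition E[f_i · 1[g_i(·)=d]] = E[f_i] · π_i(d) for every unit i. Then the covariate-adjusted (augmented inverse probability weighted) estimator ŷ_R(d)(ω) = (1/N) ∑_{i=1}^N (y_i(ω) − f_i(ω)) · 1[g_i(ω)=d] / π_i(d) + (1/N) ∑_{i=1}^N f_i(ω) satisfies E[ŷ_R(d)] = ȳ(d). -/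
open Finset

/-- Unbiased covariate adjustment without NURVA. If `π_i(d) > 0` for every
unit `i` and the random prediction values `f_i` satisfy the independence condition
`E[f_i · 1[g_i(·)=d]] = E[f_i] · π_i(d)` for every `i`, then the augmented inverse
probability weighted estimator is unbiased for the AEPO: `E[ŷ_R(d)] = ȳ(d)`. -/
theorem aipw_unbiased {Ω E : Type*} [Fintype Ω] [Nonempty Ω] [DecidableEq E]
    {N : ℕ} (hN : 1 ≤ N)
    (p : Ω → ℝ) (hp : ∀ ω, 0 ≤ p ω) (hps : ∑ ω, p ω = 1)
    (y : Fin N → Ω → ℝ) (g : Fin N → Ω → E) (d : E)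
    (hpos : ∀ i : Fin N, 0 < piP p g d i)
    (f : Fin N → Ω → ℝ)
    (hind : ∀ i : Fin N,
      expec p (fun ω => f i ω * (if g i ω = d then (1 : ℝ) else 0))
        = expec p (f i) * piP p g d i) :
    expec p (fun ω =>
        (1 / (N : ℝ)) * ∑ i, (y i ω - f i ω) * (if g i ω = d then (1 : ℝ) else 0)
            / piP p g d i
          + (1 / (N : ℝ)) * ∑ i, f i ω)
      = aepo p y g d := by
  unfold expec aepo
  have key : ∀ i : Fin N,
      ∑ ω, p ω * ((y i ω - f i ω) * (if g i ω = d then (1 : ℝ) else 0) / piP p g d i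
        + f i ω) = epo p y g d i := by
    intro i
    have hπ := (hpos i).ne'
    have hsplit : ∑ ω, p ω * ((y i ω - f i ω) * (if g i ω = d then (1 : ℝ) else 0)
        / piP p g d i + f i ω)
      = (∑ ω, p ω * (y i ω * (if g i ω = d then (1 : ℝ) else 0))) / piP p g d i
        - (∑ ω, p ω * (f i ω * (if g i ω = d then (1 : ℝ) else 0))) / piP p g d i
        + ∑ ω, p ω * f i ω := by
      rw [Finset.sum_div, Finset.sum_div, ← Finset.sum_sub_distrib,
        ← Finset.sum_add_distrib]
      exact Finset.sum_congr rfl fun ω _ => by ring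
    have hy : (∑ ω, p ω * (y i ω * (if g i ω = d then (1 : ℝ) else 0))) / piP p g d i
        = epo p y g d i := by
      rw [epo]
      congr 1
      rw [Finset.sum_filter]
      exact Finset.sum_congr rfl fun ω _ => by by_cases h : g i ω = d <;> simp [h] <;> ring
    have hf : (∑ ω, p ω * (f i ω * (if g i ω = d then (1 : ℝ) else 0))) / piP p g d i
        = ∑ ω, p ω * f i ω := by
      have := hind i
      rw [expec, expec] at this
      rw [this, mul_div_assoc, div_self hπ, mul_one]
    rw [hsplit, hy, hf]; ring
  calc ∑ ω, p ω * ((1 / (N : ℝ)) * ∑ i, (y i ω - f i ω) *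
          (if g i ω = d then (1 : ℝ) else 0) / piP p g d i
        + (1 / (N : ℝ)) * ∑ i, f i ω)
      = ∑ ω, ∑ i, (1 / (N : ℝ)) * (p ω * ((y i ω - f i ω) *
          (if g i ω = d then (1 : ℝ) else 0) / piP p g d i + f i ω)) := by
        refine Finset.sum_congr rfl fun ω _ => ?_
        rw [Finset.mul_sum, Finset.mul_sum, ← Finset.sum_add_distrib, Finset.mul_sum]
        exact Finset.sum_congr rfl fun i _ => by ring
    _ = ∑ i, (1 / (N : ℝ)) * ∑ ω, p ω * ((y i ω - f i ω) *
          (if g i ω = d then (1 : ℝ) else 0) / piP p g d i + f i ω) := by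
        rw [Finset.sum_comm]
        exact Finset.sum_congr rfl fun i _ => by rw [Finset.mul_sum]
    _ = (1 / (N : ℝ)) * ∑ i, epo p y g d i := by
        rw [Finset.mul_sum]
        exact Finset.sum_congr rfl fun i _ => by rw [key i]
end

section
/- Unbiasedness of the difference-in-means estimator for the AEED in a completely randomized experiment: let 0 < n < N, let Ω be the set of assignment vectors z : Fin N → {0,1} with exactly n ones, let p be the uniform distribution on Ω, and let the exposure mapping be individualistic, g_i(z) = z_i. Then the difference-in-means estimator T(z) = (1/n) ∑_{i : z_i = 1} y_i(z) − (1/(N−n)) ∑_{i : z_i = 0} y_i(z) satisfies E[T] = τ(1, 0) = ȳ(1) − ȳ(0). -/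
open Finset

/-- Sample space of a completely randomized experiment: assignment vectors
`z : Fin N → Bool` with exactly `n` treated units. -/
abbrev CRAssignments (N n : ℕ) : Type :=
  {z : Fin N → Bool // (Finset.univ.filter fun i => z i = true).card = n}

/-- Uniform distribution over the complete randomization assignments. -/
noncomputable def crUniform (N n : ℕ) : CRAssignments N n → ℝ :=
  fun _ => (Fintype.card (CRAssignments N n) : ℝ)⁻¹

/-- Individualistic exposure mapping `g_i(z) = z_i` for the completely randomized
experiment, with exposures in `Bool` (`true` = treated, `false` = control). -/
def crExposure (N n : ℕ) : Fin N → CRAssignments N n → Bool :=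
  fun i z => z.1 i

/-!
By double counting, `∑ i, π_i(d)` is the expected number of units with exposure `d`. Under
complete randomization the exposure probabilities of all units agree, since permuting units
preserves the uniform design, so `π_i(1) = n / N` and `π_i(0) = (N - n) / N`. With these
constants the Horvitz–Thompson estimators `ŷ(1)` and `ŷ(0)` are exactly the two treatment-group
means, and the Horvitz–Thompson estimator is unbiased for the AEPO in any design.
-/

section Design

variable {Ω E : Type*} [Fintype Ω] [DecidableEq E] {N : ℕ}

theorem expec_sub (p X Y : Ω → ℝ) :
    expec p (fun ω => X ω - Y ω) = expec p X - expec p Y := by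
  simp only [expec, mul_sub, sum_sub_distrib]

theorem expec_const {p : Ω → ℝ} (hp : ∑ ω, p ω = 1) (c : ℝ) : expec p (fun _ => c) = c := by
  rw [expec, ← sum_mul, hp, one_mul]

-- Where `π_i(d) = 0`, both sides carry the junk value `0` of division by zero.
theorem expec_ht (p : Ω → ℝ) (y : Fin N → Ω → ℝ) (g : Fin N → Ω → E) (d : E) :
    expec p (ht p y g d) = aepo p y g d := by
  simp only [expec, ht, aepo, epo, mul_sum, sum_div, sum_filter]
  rw [sum_comm]
  refine sum_congr rfl fun i _ => sum_congr rfl fun ω _ => ?_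
  split_ifs <;> ring

theorem ht_eq_of_piP_eq {p : Ω → ℝ} {y : Fin N → Ω → ℝ} {g : Fin N → Ω → E} {d : E} {c : ℝ}
    (hc : ∀ i, piP p g d i = c) (ω : Ω) :
    ht p y g d ω = 1 / (N * c) * ∑ i ∈ univ.filter (fun i => g i ω = d), y i ω := by
  simp only [ht, hc, sum_filter, mul_sum, mul_ite, mul_one, mul_zero, ite_div, zero_div]
  refine sum_congr rfl fun i _ => ?_
  split_ifs <;> field_simp

theorem sum_piP_eq_expec_card (p : Ω → ℝ) (g : Fin N → Ω → E) (d : E) :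
    ∑ i, piP p g d i = expec p (fun ω => ((univ.filter fun i => g i ω = d).card : ℝ)) := by
  simp only [piP, expec, sum_filter, card_filter, Nat.cast_sum, Nat.cast_ite, Nat.cast_one,
    Nat.cast_zero, mul_sum, mul_ite, mul_one, mul_zero]
  exact sum_comm

end Design

section CompleteRandomization

variable {N n : ℕ}

theorem CRAssignments.nonempty (h : n ≤ N) : Nonempty (CRAssignments N n) := by
  refine ⟨⟨fun i => decide (i.val < n), ?_⟩⟩
  simpa [Fin.card_filter_val_lt] using h

theorem sum_crUniform (h : n ≤ N) : ∑ z, crUniform N n z = 1 := by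
  have := CRAssignments.nonempty h
  simp [crUniform]

def CRAssignments.relabel (σ : Equiv.Perm (Fin N)) : Equiv.Perm (CRAssignments N n) :=
  (σ.arrowCongr (Equiv.refl Bool)).subtypeEquiv fun z => by
    rw [← card_map σ.toEmbedding]
    congr! 2
    ext k
    simp [Equiv.arrowCongr_apply]

theorem piP_crExposure_eq (d : Bool) (i j : Fin N) :
    piP (crUniform N n) (crExposure N n) d i = piP (crUniform N n) (crExposure N n) d j := by
  simp only [piP, sum_filter]
  refine Fintype.sum_equiv (CRAssignments.relabel (Equiv.swap i j)) _ _ fun z => ?_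
  simp only [crExposure, crUniform, CRAssignments.relabel, Equiv.subtypeEquiv_apply,
    Equiv.arrowCongr_apply, Equiv.coe_refl, Function.comp_apply, id_eq, Equiv.symm_swap,
    Equiv.swap_apply_right]
  rfl

theorem piP_crExposure (d : Bool) (i : Fin N) :
    piP (crUniform N n) (crExposure N n) d i
      = expec (crUniform N n)
          (fun z => ((univ.filter fun k => z.1 k = d).card : ℝ)) / N := by
  have hN : (N : ℝ) ≠ 0 := by exact_mod_cast (Fin.pos i).ne'
  have hsum := sum_piP_eq_expec_card (crUniform N n) (crExposure N n) d
  rw [sum_congr rfl fun j _ => piP_crExposure_eq d j i, sum_const, card_univ, Fintype.card_fin,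
    nsmul_eq_mul] at hsum
  rw [eq_div_iff hN, mul_comm, hsum]
  rfl

theorem piP_crExposure_true (h : n ≤ N) (i : Fin N) :
    piP (crUniform N n) (crExposure N n) true i = n / N := by
  rw [piP_crExposure, ← expec_const (sum_crUniform h) (n : ℝ)]
  congr 2
  funext z
  rw [z.2]

theorem piP_crExposure_false (h : n ≤ N) (i : Fin N) :
    piP (crUniform N n) (crExposure N n) false i = (N - n) / N := by
  rw [piP_crExposure, ← expec_const (sum_crUniform h) ((N : ℝ) - n)]
  congr 2
  funext ⟨z, hz⟩
  have hsplit := card_filter_add_card_filter_not (s := univ) fun k => z k = true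
  simp only [Bool.not_eq_true, card_univ, Fintype.card_fin, hz] at hsplit
  rw [eq_sub_iff_add_eq, add_comm]
  exact_mod_cast hsplit

end CompleteRandomization

theorem diff_in_means_unbiased_for_aeed_general {N n : ℕ} (hnN : n < N)
    (y : Fin N → CRAssignments N n → ℝ) :
    expec (crUniform N n) (fun z =>
        (1 / (n : ℝ)) * ∑ i ∈ Finset.univ.filter (fun i : Fin N => z.1 i = true), y i z
          - (1 / ((N : ℝ) - (n : ℝ)))
              * ∑ i ∈ Finset.univ.filter (fun i : Fin N => z.1 i = false), y i z)
      = aepo (crUniform N n) y (crExposure N n) true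
          - aepo (crUniform N n) y (crExposure N n) false := by
  have hN : (N : ℝ) ≠ 0 := by exact_mod_cast (Nat.zero_lt_of_lt hnN).ne'
  have ht_true := ht_eq_of_piP_eq (y := y) (piP_crExposure_true hnN.le)
  have ht_false := ht_eq_of_piP_eq (y := y) (piP_crExposure_false hnN.le)
  rw [← expec_ht, ← expec_ht, ← expec_sub]
  congr 1
  funext z
  rw [ht_true, ht_false, mul_div_cancel₀ _ hN, mul_div_cancel₀ _ hN]
  rfl

/-- In a completely randomized experiment with `0 < n < N` treated units
(uniform distribution on assignment vectors with exactly `n` ones, individualistic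
exposure mapping), the difference-in-means estimator
`T(z) = (1/n) ∑_{i : z_i = 1} y_i(z) − (1/(N−n)) ∑_{i : z_i = 0} y_i(z)`
is unbiased for the AEED: `E[T] = τ(1,0) = ȳ(1) − ȳ(0)`. -/
theorem diff_in_means_unbiased_for_aeed {N n : ℕ} (hn : 0 < n) (hnN : n < N)
    (y : Fin N → CRAssignments N n → ℝ) :
    expec (crUniform N n) (fun z =>
        (1 / (n : ℝ)) * ∑ i ∈ Finset.univ.filter (fun i : Fin N => z.1 i = true), y i z
          - (1 / ((N : ℝ) - (n : ℝ)))
              * ∑ i ∈ Finset.univ.filter (fun i : Fin N => z.1 i = false), y i z)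
      = aepo (crUniform N n) y (crExposure N n) true
          - aepo (crUniform N n) y (crExposure N n) false :=
  diff_in_means_unbiased_for_aeed_general hnN y
end
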